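/- Let (x, y) be a pair of unimodular complex sequences of length N forming a Golay complementary pair, and let a, b be complex sequences of length L. Define four L×N complex arrays by X₁[i,j] = a_i·x_j, X₂[i,j] = b_i·y_j, X₃[i,j] = −a_i·conj(y_{N-1-j}), and X₄[i,j] = b_i·conj(x_{N-1-j}). Then for all integer shifts τ₁, τ₂ with |τ₁| < L and |τ₂| < N, the sum ρ_{X₁}(τ₁,τ₂) + ρ_{X₂}(τ₁,τ₂) + ρ_{X₃}(τ₁,τ₂) + ρ_{X₄}(τ₁,τ₂) equals 2N·(ρ_a(τ₁) + ρ_b(τ₁)) if τ₂ = 0, and equals 0 if τ₂ ≠ 0. -/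

import Mathlib

open Finset

noncomputable section

/-- 1D aperiodic autocorrelation of a length-`N` complex sequence at integer shift `τ`:
`ρ_x(τ) = Σ x_j * conj (x_{j+τ})`, summed over all `j` with `j` and `j + τ` in `[0, N)`. -/
def acorr (N : ℕ) (x : ℕ → ℂ) (τ : ℤ) : ℂ :=
  ∑ j ∈ Finset.range N,
    if 0 ≤ (j : ℤ) + τ ∧ (j : ℤ) + τ < (N : ℤ) then
      x j * star (x ((j : ℤ) + τ).toNat)
    else 0

/-- 2D aperiodic autocorrelation of an `N₁ × N₂` complex array at integer shifts `(τ₁, τ₂)`. -/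
def acorr2 (N₁ N₂ : ℕ) (X : ℕ → ℕ → ℂ) (τ₁ τ₂ : ℤ) : ℂ :=
  ∑ i ∈ Finset.range N₁, ∑ j ∈ Finset.range N₂,
    if (0 ≤ (i : ℤ) + τ₁ ∧ (i : ℤ) + τ₁ < (N₁ : ℤ)) ∧
       (0 ≤ (j : ℤ) + τ₂ ∧ (j : ℤ) + τ₂ < (N₂ : ℤ)) then
      X i j * star (X ((i : ℤ) + τ₁).toNat ((j : ℤ) + τ₂).toNat)
    else 0

/-- Peak-to-mean envelope power ratio of a length-`L` complex sequence:
`sup_{t ∈ [0,1]} (1/L) * |Σ_{i<L} c_i exp(2π√-1 i t)|²`. -/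
def pmepr (L : ℕ) (c : ℕ → ℂ) : ℝ :=
  ⨆ t : Set.Icc (0 : ℝ) 1,
    (‖(∑ i ∈ Finset.range L,
      c i * Complex.exp (2 * Real.pi * Complex.I * (i : ℂ) * ((t : ℝ) : ℂ)))‖) ^ 2 / L

/-! Each of the four arrays is separable, so its 2D autocorrelation is the product of the 1D
autocorrelations of its factors. Negating an array or conjugate-reversing a sequence does not
change its autocorrelation, so the sum equals `(ρ_a(τ₁) + ρ_b(τ₁)) (ρ_x(τ₂) + ρ_y(τ₂))`. The
second factor is `2N` at `τ₂ = 0` because `x` and `y` are unimodular, and vanishes otherwise since `(x, y)` is a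
Golay complementary pair. -/

lemma acorr2_mul (L N : ℕ) (c d : ℕ → ℂ) (τ₁ τ₂ : ℤ) :
    acorr2 L N (fun i j => c i * d j) τ₁ τ₂ = acorr L c τ₁ * acorr N d τ₂ := by
  rw [acorr2, acorr, acorr, sum_mul_sum]
  refine sum_congr rfl fun i _ => sum_congr rfl fun j _ => ?_
  split_ifs <;> simp_all [star_mul', mul_mul_mul_comm]

lemma acorr2_neg (L N : ℕ) (X : ℕ → ℕ → ℂ) (τ₁ τ₂ : ℤ) :
    acorr2 L N (fun i j => -X i j) τ₁ τ₂ = acorr2 L N X τ₁ τ₂ := by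
  simp [acorr2]

lemma acorr_eq_sum_filter (N : ℕ) (x : ℕ → ℂ) (τ : ℤ) :
    acorr N x τ = ∑ j ∈ (range N).filter (fun j : ℕ => 0 ≤ (j : ℤ) + τ ∧ (j : ℤ) + τ < N),
      x j * star (x ((j : ℤ) + τ).toNat) := by
  rw [acorr, sum_filter]

/-- The pairing `j ↦ N - 1 - j - τ` matches the terms of both sums. -/
lemma acorr_conj_reverse (N : ℕ) (x : ℕ → ℂ) (τ : ℤ) :
    acorr N (fun j => star (x (N - 1 - j))) τ = acorr N x τ := by
  rw [acorr_eq_sum_filter, acorr_eq_sum_filter]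
  refine sum_nbij' (fun j => ((N : ℤ) - 1 - j - τ).toNat) (fun j => ((N : ℤ) - 1 - j - τ).toNat)
    ?_ ?_ ?_ ?_ ?terms
  case terms =>
    intro j hj
    simp only [mem_filter, mem_range] at hj
    have e₁ : (((N : ℤ) - 1 - j - τ).toNat + τ).toNat = N - 1 - j := by omega
    have e₂ : N - 1 - ((j : ℤ) + τ).toNat = ((N : ℤ) - 1 - j - τ).toNat := by omega
    rw [e₁, e₂, star_star, mul_comm]
  all_goals
    intro j hj
    simp only [mem_filter, mem_range] at hj ⊢
    omega

lemma acorr_zero_of_norm_eq_one (N : ℕ) (x : ℕ → ℂ) (hx : ∀ j < N, ‖x j‖ = 1) :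
    acorr N x 0 = N := by
  rw [acorr_eq_sum_filter, filter_true_of_mem (fun j hj => by rw [mem_range] at hj; omega)]
  calc ∑ j ∈ range N, x j * star (x ((j : ℤ) + 0).toNat)
      = ∑ j ∈ range N, (1 : ℂ) := sum_congr rfl fun j hj => by
        rw [mem_range] at hj
        simp [Complex.mul_conj, Complex.normSq_eq_norm_sq, hx j hj]
    _ = N := by simp

lemma sum_acorr2_golay_arrays (L N : ℕ) (x y a b : ℕ → ℂ) (τ₁ τ₂ : ℤ) :
    acorr2 L N (fun i j => a i * x j) τ₁ τ₂ +
      acorr2 L N (fun i j => b i * y j) τ₁ τ₂ +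
      acorr2 L N (fun i j => -(a i * star (y (N - 1 - j)))) τ₁ τ₂ +
      acorr2 L N (fun i j => b i * star (x (N - 1 - j))) τ₁ τ₂ =
    (acorr L a τ₁ + acorr L b τ₁) * (acorr N x τ₂ + acorr N y τ₂) := by
  rw [acorr2_neg, acorr2_mul, acorr2_mul, acorr2_mul L N a (fun j => star (y (N - 1 - j))),
    acorr2_mul L N b (fun j => star (x (N - 1 - j))), acorr_conj_reverse, acorr_conj_reverse]
  ring

theorem stmt_3_general (L N : ℕ) (x y a b : ℕ → ℂ)
    (hx : ∀ j < N, ‖x j‖ = 1) (hy : ∀ j < N, ‖y j‖ = 1)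
    (hGCP : ∀ τ : ℤ, 1 ≤ |τ| → |τ| ≤ (N : ℤ) - 1 → acorr N x τ + acorr N y τ = 0)
    (τ₁ τ₂ : ℤ) (h₂ : |τ₂| < (N : ℤ)) :
    acorr2 L N (fun i j => a i * x j) τ₁ τ₂ +
      acorr2 L N (fun i j => b i * y j) τ₁ τ₂ +
      acorr2 L N (fun i j => -(a i * star (y (N - 1 - j)))) τ₁ τ₂ +
      acorr2 L N (fun i j => b i * star (x (N - 1 - j))) τ₁ τ₂ =
    if τ₂ = 0 then 2 * (N : ℂ) * (acorr L a τ₁ + acorr L b τ₁) else 0 := by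
  rw [sum_acorr2_golay_arrays]
  split_ifs with hτ₂
  · rw [hτ₂, acorr_zero_of_norm_eq_one N x hx, acorr_zero_of_norm_eq_one N y hy]
    ring
  · rw [hGCP τ₂ (Int.one_le_abs hτ₂) (by omega), mul_zero]

/-- for a unimodular GCP `(x, y)` of length `N`, the sum of the four 2D
autocorrelations equals `2N (ρ_a(τ₁) + ρ_b(τ₁))` when `τ₂ = 0`, and `0` when `τ₂ ≠ 0`. -/
theorem stmt_3 (L N : ℕ) (x y a b : ℕ → ℂ)
    (hx : ∀ j < N, ‖x j‖ = 1) (hy : ∀ j < N, ‖y j‖ = 1)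
    (hGCP : ∀ τ : ℤ, 1 ≤ |τ| → |τ| ≤ (N : ℤ) - 1 → acorr N x τ + acorr N y τ = 0)
    (τ₁ τ₂ : ℤ) (h₁ : |τ₁| < (L : ℤ)) (h₂ : |τ₂| < (N : ℤ)) :
    acorr2 L N (fun i j => a i * x j) τ₁ τ₂ +
      acorr2 L N (fun i j => b i * y j) τ₁ τ₂ +
      acorr2 L N (fun i j => -(a i * star (y (N - 1 - j)))) τ₁ τ₂ +
      acorr2 L N (fun i j => b i * star (x (N - 1 - j))) τ₁ τ₂ =
    if τ₂ = 0 then 2 * (N : ℂ) * (acorr L a τ₁ + acorr L b τ₁) else 0 :=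
  stmt_3_general L N x y a b hx hy hGCP τ₁ τ₂ h₂

end
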